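/- arXiv:1412.0190 — 5 statements merged into one kernel-verified Lean document; each statement's English description precedes it below -/
import Mathlib

section
/- For any $\rho\in(1,\infty)$ and $p\in(0,1]$, there exists a positive constant $c_{(\rho,p,\nu)}$ such that for all balls $B\subset R\subset S$ in an upper doubling metric measure space, $[\widetilde K^{(\rho),p}_{B,S}]^p\le [\widetilde K^{(\rho),p}_{B,R}]^p + c_{(\rho,p,\nu)}[\widetilde K^{(\rho),p}_{R,S}]^p$. -/
open MeasureTheory Metric Real

/-- `Ndisc ρ rB rS` is the smallest integer `N` with `ρ ^ N * rB ≥ rS`. -/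
noncomputable def Ndisc (ρ rB rS : ℝ) : ℤ := ⌈Real.logb ρ (rS / rB)⌉

/-- The `p`-th power of the discrete coefficient `K̃^{(ρ),p}_{B,S}`, for balls
`B = B(c, rB) ⊆ S` with `rS` the radius of `S`:
`[K̃^{(ρ),p}_{B,S}]^p = 1 + ∑_{k=-⌊log_ρ 2⌋}^{N^{(ρ)}_{B,S}} [μ(ρ^k B)/λ(c_B, ρ^k r_B)]^p`. -/
noncomputable def Kp {X : Type*} [MetricSpace X] [MeasurableSpace X]
    (μ : Measure X) (lam : X → ℝ → ℝ) (ρ p : ℝ) (c : X) (rB rS : ℝ) : ℝ :=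
  1 + ∑ k ∈ Finset.Icc (-⌊Real.logb ρ 2⌋) (Ndisc ρ rB rS),
      ((μ (Metric.ball c (ρ ^ k * rB))).toReal / lam c (ρ ^ k * rB)) ^ p

/-- Iterated half-doubling: `λ(x, 2^n r) ≤ C^n λ(x, r)`. -/
private lemma lam_two_pow {X : Type*} (lam : X → ℝ → ℝ) (Cl : ℝ) (hCl : 1 ≤ Cl)
    (hhalf : ∀ (x : X) (r : ℝ), 0 < r → lam x r ≤ Cl * lam x (r / 2)) (x : X) :
    ∀ (n : ℕ) (r : ℝ), 0 < r → lam x (2 ^ n * r) ≤ Cl ^ n * lam x r := by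
  intro n
  induction n with
  | zero => intro r hr; simp
  | succ n ih =>
    intro r hr
    have h2 : (0:ℝ) < 2 ^ (n+1) * r := by positivity
    have e : (2 ^ (n+1) * r) / 2 = 2 ^ n * r := by ring
    calc lam x (2 ^ (n+1) * r) ≤ Cl * lam x ((2 ^ (n+1) * r) / 2) := hhalf _ _ h2
      _ = Cl * lam x (2 ^ n * r) := by rw [e]
      _ ≤ Cl * (Cl ^ n * lam x r) :=
          mul_le_mul_of_nonneg_left (ih r hr) (by linarith)
      _ = Cl ^ (n+1) * lam x r := by ring

set_option maxHeartbeats 1000000 in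
/-- Lemma 2.8(iv): there exists a constant `c = c_{(ρ,p,ν)} > 0` such that for all balls
`B ⊆ R ⊆ S`, `[K̃^{(ρ),p}_{B,S}]^p ≤ [K̃^{(ρ),p}_{B,R}]^p + c [K̃^{(ρ),p}_{R,S}]^p`. -/
theorem Kp_triangle {X : Type*} [MetricSpace X] [MeasurableSpace X]
    (μ : Measure X) (lam : X → ℝ → ℝ) (Cl Ct : ℝ) (hCl : 1 ≤ Cl) (hCt : 1 ≤ Ct)
    (hlam_pos : ∀ (x : X) (r : ℝ), 0 < r → 0 < lam x r)
    (hlam_mono : ∀ (x : X) (r s : ℝ), 0 < r → r ≤ s → lam x r ≤ lam x s)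
    (hud : ∀ (x : X) (r : ℝ), 0 < r → μ (Metric.ball x r) ≤ ENNReal.ofReal (lam x r))
    (hhalf : ∀ (x : X) (r : ℝ), 0 < r → lam x r ≤ Cl * lam x (r / 2))
    (hreg : ∀ (x y : X) (r : ℝ), 0 < r → dist x y ≤ r → lam x r ≤ Ct * lam y r)
    (ρ p : ℝ) (hρ : 1 < ρ) (hp : 0 < p) (hp1 : p ≤ 1) :
    ∃ c : ℝ, 0 < c ∧ ∀ (cB cR cS : X) (rB rR rS : ℝ),
      0 < rB → 0 < rR → 0 < rS →
      Metric.ball cB rB ⊆ Metric.ball cR rR →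
      Metric.ball cR rR ⊆ Metric.ball cS rS →
      Kp μ lam ρ p cB rB rS ≤ Kp μ lam ρ p cB rB rR + c * Kp μ lam ρ p cR rR rS := by
  have hρ0 : (0:ℝ) < ρ := lt_trans one_pos hρ
  have hCl0 : (0:ℝ) < Cl := lt_of_lt_of_le one_pos hCl
  -- two monotonicity facts for `rpow` vs integer powers of ρ
  have hup : ∀ (u : ℝ), 0 < u → ∀ n : ℤ, Real.logb ρ u ≤ (n:ℝ) → u ≤ ρ ^ n := by
    intro u hu n hn
    have h := Real.rpow_le_rpow_of_exponent_le hρ.le hn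
    rwa [Real.rpow_logb hρ0 hρ.ne' hu, Real.rpow_intCast] at h
  have hdown : ∀ (u : ℝ), 0 < u → ∀ n : ℤ, (n:ℝ) ≤ Real.logb ρ u → ρ ^ n ≤ u := by
    intro u hu n hn
    have h := Real.rpow_le_rpow_of_exponent_le hρ.le hn
    rwa [Real.rpow_logb hρ0 hρ.ne' hu, Real.rpow_intCast] at h
  -- choose m0 with ρ^m0 ≥ 2ρ
  set m0 : ℤ := ⌈Real.logb ρ (2*ρ)⌉ with hm0def
  have hm0 : 2*ρ ≤ ρ ^ m0 := hup (2*ρ) (by positivity) m0 (Int.le_ceil _)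
  have hm0nonneg : 0 ≤ m0 := by
    by_contra h
    push_neg at h
    have : ρ ^ m0 ≤ ρ ^ (0:ℤ) := zpow_le_zpow_right₀ hρ.le (by omega)
    simp only [zpow_zero] at this
    linarith
  -- choose m1 with 2^m1 ≥ ρ^m0
  set m1 : ℕ := ⌈Real.logb 2 (ρ ^ m0)⌉₊ with hm1def
  have hm1 : ρ ^ m0 ≤ 2 ^ m1 := by
    have hpos : (0:ℝ) < ρ ^ m0 := zpow_pos hρ0 m0
    have h := Real.rpow_le_rpow_of_exponent_le (by norm_num : (1:ℝ) ≤ 2)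
      (Nat.le_ceil (Real.logb 2 (ρ ^ m0)))
    rwa [Real.rpow_logb (by norm_num) (by norm_num) hpos, Real.rpow_natCast] at h
  set D0 : ℝ := Cl ^ m1 * Ct with hD0def
  have hD0 : 1 ≤ D0 := one_le_mul_of_one_le_of_one_le (one_le_pow₀ hCl) hCt
  refine ⟨D0 + (m0.toNat : ℝ), by positivity, ?_⟩
  intro cB cR cS rB rR rS hrB hrR hrS hBR hRS
  set L : ℤ := -⌊Real.logb ρ 2⌋ with hLdef
  set N1 : ℤ := Ndisc ρ rB rR with hN1def
  set N2 : ℤ := Ndisc ρ rR rS with hN2def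
  set N : ℤ := Ndisc ρ rB rS with hNdef
  set f : ℤ → ℝ :=
    fun k => ((μ (Metric.ball cB (ρ ^ k * rB))).toReal / lam cB (ρ ^ k * rB)) ^ p with hfdef
  set g : ℤ → ℝ :=
    fun k => ((μ (Metric.ball cR (ρ ^ k * rR))).toReal / lam cR (ρ ^ k * rR)) ^ p with hgdef
  have hKpBS : Kp μ lam ρ p cB rB rS = 1 + ∑ k ∈ Finset.Icc L N, f k := rfl
  have hKpBR : Kp μ lam ρ p cB rB rR = 1 + ∑ k ∈ Finset.Icc L N1, f k := rfl
  have hKpRS : Kp μ lam ρ p cR rR rS = 1 + ∑ k ∈ Finset.Icc L N2, g k := rfl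
  -- basic term facts
  have hterm_nonneg : ∀ (x : X) (r : ℝ), 0 < r →
      0 ≤ ((μ (Metric.ball x r)).toReal / lam x r) ^ p := by
    intro x r hr
    have := hlam_pos x r hr
    positivity
  have hratio_le_one : ∀ (x : X) (r : ℝ), 0 < r →
      (μ (Metric.ball x r)).toReal / lam x r ≤ 1 := by
    intro x r hr
    have hl := hlam_pos x r hr
    have hμ : (μ (Metric.ball x r)).toReal ≤ lam x r := by
      have h := ENNReal.toReal_mono ENNReal.ofReal_ne_top (hud x r hr)
      rwa [ENNReal.toReal_ofReal hl.le] at h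
    exact (div_le_one hl).mpr hμ
  have hterm_le_one : ∀ (x : X) (r : ℝ), 0 < r →
      ((μ (Metric.ball x r)).toReal / lam x r) ^ p ≤ 1 := by
    intro x r hr
    have hl := hlam_pos x r hr
    exact Real.rpow_le_one (by positivity) (hratio_le_one x r hr) hp.le
  have hf0 : ∀ k, 0 ≤ f k := fun k => hterm_nonneg _ _ (by positivity)
  have hg0 : ∀ k, 0 ≤ g k := fun k => hterm_nonneg _ _ (by positivity)
  have hf1 : ∀ k : ℤ, f k ≤ 1 := by
    intro k
    exact hterm_le_one cB (ρ ^ k * rB) (by positivity)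
  have hd : dist cB cR < rR := by
    have := hBR (mem_ball_self hrB)
    rwa [mem_ball] at this
  have hN1low : rR ≤ ρ ^ N1 * rB := by
    have h := hup (rR / rB) (by positivity) N1 (Int.le_ceil _)
    rw [div_le_iff₀ hrB] at h
    linarith [h]
  have hN1up : ρ ^ N1 * rB ≤ ρ * rR := by
    have hlt : ((N1:ℝ) - 1) ≤ Real.logb ρ (rR / rB) := by
      have := Int.ceil_lt_add_one (Real.logb ρ (rR / rB))
      rw [hN1def, Ndisc]
      push_cast
      linarith
    have h : ρ ^ (N1 - 1) ≤ rR / rB := by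
      have := hdown (rR / rB) (by positivity) (N1 - 1) (by push_cast; linarith)
      exact this
    have h2 : ρ ^ (N1 - 1) * rB ≤ rR := by
      rw [← le_div_iff₀ hrB]
      exact h
    have h3 : ρ ^ N1 = ρ ^ (N1 - 1) * ρ := by
      rw [← zpow_add_one₀ hρ0.ne' (N1 - 1)]
      congr 1
      omega
    rw [h3]
    nlinarith [zpow_pos hρ0 (N1 - 1)]
  have hNle : N ≤ N1 + N2 := by
    have hsplit : rS / rB = (rR / rB) * (rS / rR) := by
      field_simp
    have hlog : Real.logb ρ (rS/rB) = Real.logb ρ (rR/rB) + Real.logb ρ (rS/rR) := by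
      rw [hsplit, Real.logb_mul (by positivity) (by positivity)]
    calc N = ⌈Real.logb ρ (rR/rB) + Real.logb ρ (rS/rR)⌉ := by
            rw [hNdef, Ndisc, hlog]
      _ ≤ N1 + N2 := Int.ceil_add_le _ _
  have hL0 : L ≤ 0 := by
    have : (0:ℤ) ≤ ⌊Real.logb ρ 2⌋ :=
      Int.floor_nonneg.mpr (Real.logb_nonneg hρ (by norm_num))
    omega
  -- the key per-term estimate
  have hkey : ∀ k : ℤ, N1 + 1 ≤ k → f k ≤ D0 * g (k + (m0 - N1)) := by
    intro k hk
    set j : ℤ := k + (m0 - N1) with hjdef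
    set a : ℝ := ρ ^ k * rB with hadef
    set b : ℝ := ρ ^ j * rR with hbdef
    have hapos : 0 < a := by positivity
    have hbpos : 0 < b := by positivity
    have hka : ρ ^ N1 ≤ ρ ^ k := zpow_le_zpow_right₀ hρ.le (by omega)
    have haR : rR ≤ a := hN1low.trans (mul_le_mul_of_nonneg_right hka hrB.le)
    have hz1 : (0:ℝ) < ρ ^ N1 := zpow_pos hρ0 N1
    have hzk : (0:ℝ) < ρ ^ k := zpow_pos hρ0 k
    have hzz : ρ ^ j * ρ ^ N1 = ρ ^ k * ρ ^ m0 := by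
      rw [← zpow_add₀ hρ0.ne', ← zpow_add₀ hρ0.ne']
      congr 1
      omega
    have h2ab : 2 * a ≤ b := by
      have e1 : 2 * (rB * ρ ^ N1) ≤ ρ ^ m0 * rR := by nlinarith
      have h : (2 * a) * ρ ^ N1 ≤ b * ρ ^ N1 := by
        have hb' : b * ρ ^ N1 = ρ ^ k * (ρ ^ m0 * rR) := by
          rw [hbdef]
          linear_combination rR * hzz
        rw [hb', hadef]
        nlinarith
      exact le_of_mul_le_mul_right h hz1
    have hb_le : b ≤ 2 ^ m1 * a := by
      have h : b * ρ ^ N1 ≤ (ρ ^ m0 * a) * ρ ^ N1 := by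
        have hb' : b * ρ ^ N1 = ρ ^ k * (ρ ^ m0 * rR) := by
          rw [hbdef]
          linear_combination rR * hzz
        have hm0pos : (0:ℝ) < ρ ^ m0 := zpow_pos hρ0 m0
        rw [hb', hadef]
        calc ρ ^ k * (ρ ^ m0 * rR) ≤ ρ ^ k * (ρ ^ m0 * (ρ ^ N1 * rB)) := by
              refine mul_le_mul_of_nonneg_left ?_ hzk.le
              exact mul_le_mul_of_nonneg_left hN1low hm0pos.le
          _ = ρ ^ m0 * (ρ ^ k * rB) * ρ ^ N1 := by ring
      have h2 : b ≤ ρ ^ m0 * a := le_of_mul_le_mul_right h hz1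
      have h3 : ρ ^ m0 * a ≤ 2 ^ m1 * a := mul_le_mul_of_nonneg_right hm1 hapos.le
      linarith
    have hincl : Metric.ball cB a ⊆ Metric.ball cR b := by
      intro y hy
      rw [mem_ball] at hy ⊢
      calc dist y cR ≤ dist y cB + dist cB cR := dist_triangle _ _ _
        _ < a + rR := by linarith
        _ ≤ b := by linarith
    have hμle : (μ (Metric.ball cB a)).toReal ≤ (μ (Metric.ball cR b)).toReal := by
      refine ENNReal.toReal_mono ?_ (measure_mono hincl)
      exact ((hud cR b hbpos).trans_lt ENNReal.ofReal_lt_top).ne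
    have hlamchain : lam cR b ≤ Cl ^ m1 * (Ct * lam cB a) := by
      have l1 : lam cR b ≤ lam cR (2 ^ m1 * a) := hlam_mono cR b _ hbpos hb_le
      have l2 : lam cR (2 ^ m1 * a) ≤ Cl ^ m1 * lam cR a :=
        lam_two_pow lam Cl hCl hhalf cR m1 a hapos
      have l3 : lam cR a ≤ Ct * lam cB a := by
        refine hreg cR cB a hapos ?_
        rw [dist_comm]
        linarith
      calc lam cR b ≤ Cl ^ m1 * lam cR a := l1.trans l2
        _ ≤ Cl ^ m1 * (Ct * lam cB a) :=
            mul_le_mul_of_nonneg_left l3 (by positivity)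
    have hlBpos := hlam_pos cB a hapos
    have hlRpos := hlam_pos cR b hbpos
    have hratio : (μ (Metric.ball cB a)).toReal / lam cB a ≤
        D0 * ((μ (Metric.ball cR b)).toReal / lam cR b) := by
      have key : (μ (Metric.ball cB a)).toReal * lam cR b ≤
          (μ (Metric.ball cR b)).toReal * (Cl ^ m1 * (Ct * lam cB a)) :=
        mul_le_mul hμle hlamchain hlRpos.le ENNReal.toReal_nonneg
      rw [div_le_iff₀ hlBpos]
      have e : D0 * ((μ (Metric.ball cR b)).toReal / lam cR b) * lam cB a =
          ((μ (Metric.ball cR b)).toReal * (Cl ^ m1 * (Ct * lam cB a))) / lam cR b := by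
        field_simp
        ring
      rw [e, le_div_iff₀ hlRpos]
      exact key
    have hfk : f k = ((μ (Metric.ball cB a)).toReal / lam cB a) ^ p := rfl
    have hgj : g j = ((μ (Metric.ball cR b)).toReal / lam cR b) ^ p := rfl
    rw [hfk, hgj]
    have hrB0 : 0 ≤ (μ (Metric.ball cB a)).toReal / lam cB a := by positivity
    have hrR0 : 0 ≤ (μ (Metric.ball cR b)).toReal / lam cR b := by positivity
    calc ((μ (Metric.ball cB a)).toReal / lam cB a) ^ p
        ≤ (D0 * ((μ (Metric.ball cR b)).toReal / lam cR b)) ^ p :=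
          Real.rpow_le_rpow hrB0 hratio hp.le
      _ = D0 ^ p * ((μ (Metric.ball cR b)).toReal / lam cR b) ^ p :=
          Real.mul_rpow (by linarith) hrR0
      _ ≤ D0 * ((μ (Metric.ball cR b)).toReal / lam cR b) ^ p := by
          have h1 : D0 ^ p ≤ D0 := by
            calc D0 ^ p ≤ D0 ^ (1:ℝ) := Real.rpow_le_rpow_of_exponent_le hD0 hp1
              _ = D0 := Real.rpow_one D0
          exact mul_le_mul_of_nonneg_right h1 (Real.rpow_nonneg hrR0 p)
  -- sum manipulations
  have hA1 : ∑ k ∈ Finset.Icc L N, f k ≤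
      ∑ k ∈ Finset.Icc L N1, f k + ∑ k ∈ Finset.Icc (N1+1) N, f k := by
    rw [← Finset.sum_union (by
      simp only [Finset.disjoint_left, Finset.mem_Icc]
      intro x hx hx'
      omega)]
    refine Finset.sum_le_sum_of_subset_of_nonneg ?_ (fun k _ _ => hf0 k)
    intro k hk
    simp only [Finset.mem_Icc, Finset.mem_union] at hk ⊢
    omega
  have hA2 : ∑ k ∈ Finset.Icc (N1+1) N, f k ≤
      ∑ k ∈ Finset.Icc (N1+1) (N - m0), f k + ∑ k ∈ Finset.Icc (N - m0 + 1) N, f k := by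
    rw [← Finset.sum_union (by
      simp only [Finset.disjoint_left, Finset.mem_Icc]
      intro x hx hx'
      omega)]
    refine Finset.sum_le_sum_of_subset_of_nonneg ?_ (fun k _ _ => hf0 k)
    intro k hk
    simp only [Finset.mem_Icc, Finset.mem_union] at hk ⊢
    omega
  have hA3 : ∑ k ∈ Finset.Icc (N - m0 + 1) N, f k ≤ (m0.toNat : ℝ) := by
    calc ∑ k ∈ Finset.Icc (N - m0 + 1) N, f k
        ≤ (Finset.Icc (N - m0 + 1) N).card • (1:ℝ) :=
          Finset.sum_le_card_nsmul _ _ _ (fun k _ => hf1 k)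
      _ = ((Finset.Icc (N - m0 + 1) N).card : ℝ) := by simp
      _ = (m0.toNat : ℝ) := by
          rw [Int.card_Icc]
          congr 1
          omega
  have hA4 : ∑ k ∈ Finset.Icc (N1+1) (N - m0), f k ≤ D0 * ∑ j ∈ Finset.Icc L N2, g j := by
    have step1 : ∑ k ∈ Finset.Icc (N1+1) (N - m0), f k ≤
        ∑ k ∈ Finset.Icc (N1+1) (N - m0), D0 * g (k + (m0 - N1)) := by
      refine Finset.sum_le_sum ?_
      intro k hk
      simp only [Finset.mem_Icc] at hk
      exact hkey k hk.1
    have step2 : ∑ k ∈ Finset.Icc (N1+1) (N - m0), D0 * g (k + (m0 - N1)) =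
        ∑ j ∈ Finset.Icc (N1 + 1 + (m0 - N1)) (N - m0 + (m0 - N1)), D0 * g j := by
      rw [← Finset.map_add_right_Icc, Finset.sum_map]
      rfl
    have step3 : ∑ j ∈ Finset.Icc (N1 + 1 + (m0 - N1)) (N - m0 + (m0 - N1)), D0 * g j ≤
        ∑ j ∈ Finset.Icc L N2, D0 * g j := by
      refine Finset.sum_le_sum_of_subset_of_nonneg ?_
        (fun j _ _ => mul_nonneg (by linarith) (hg0 j))
      intro j hj
      simp only [Finset.mem_Icc] at hj ⊢
      omega
    calc ∑ k ∈ Finset.Icc (N1+1) (N - m0), f k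
        ≤ ∑ k ∈ Finset.Icc (N1+1) (N - m0), D0 * g (k + (m0 - N1)) := step1
      _ = ∑ j ∈ Finset.Icc (N1 + 1 + (m0 - N1)) (N - m0 + (m0 - N1)), D0 * g j := step2
      _ ≤ ∑ j ∈ Finset.Icc L N2, D0 * g j := step3
      _ = D0 * ∑ j ∈ Finset.Icc L N2, g j := by rw [Finset.mul_sum]
  have hgsum : 0 ≤ ∑ j ∈ Finset.Icc L N2, g j :=
    Finset.sum_nonneg (fun j _ => hg0 j)
  rw [hKpBS, hKpBR, hKpRS]
  have hm0toNat : (0:ℝ) ≤ (m0.toNat : ℝ) := Nat.cast_nonneg _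
  nlinarith [hA1, hA2, hA3, hA4, hgsum, hD0, hm0toNat]
end

section
/- For any $\rho_1,\rho_2\in(1,\infty)$ and $p\in(0,1]$, there exist positive constants $c$ and $C$ (depending on $\rho_1,\rho_2,p,\nu$) such that for all balls $B\subset S$, $c\,\widetilde K^{(\rho_2),p}_{B,S}\le\widetilde K^{(\rho_1),p}_{B,S}\le C\,\widetilde K^{(\rho_2),p}_{B,S}$. -/
open MeasureTheory Metric Real

section Aux
variable {X : Type*} [MetricSpace X] [MeasurableSpace X]

set_option linter.unusedSectionVars false

lemma lam_iter (lam : X → ℝ → ℝ) (Cl : ℝ) (hCl : 1 ≤ Cl)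
    (hhalf : ∀ (x : X) (r : ℝ), 0 < r → lam x r ≤ Cl * lam x (r / 2)) :
    ∀ (m : ℕ) (x : X) (r : ℝ), 0 < r → lam x r ≤ Cl ^ m * lam x (r / 2 ^ m) := by
  intro m
  induction m with
  | zero => intro x r hr; simp
  | succ n ih =>
    intro x r hr
    have hCl0 : (0:ℝ) ≤ Cl := le_trans zero_le_one hCl
    calc lam x r ≤ Cl * lam x (r / 2) := hhalf x r hr
      _ ≤ Cl * (Cl ^ n * lam x (r / 2 / 2 ^ n)) :=
          mul_le_mul_of_nonneg_left (ih x (r/2) (by positivity)) hCl0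
      _ = Cl ^ (n+1) * lam x (r / 2 ^ (n+1)) := by
          rw [div_div, ← pow_succ']
          ring

lemma g_doubling (μ : Measure X) (lam : X → ℝ → ℝ) (Cl : ℝ) (hCl : 1 ≤ Cl)
    (hlam_pos : ∀ (x : X) (r : ℝ), 0 < r → 0 < lam x r)
    (hlam_mono : ∀ (x : X) (r s : ℝ), 0 < r → r ≤ s → lam x r ≤ lam x s)
    (hud : ∀ (x : X) (r : ℝ), 0 < r → μ (Metric.ball x r) ≤ ENNReal.ofReal (lam x r))
    (hhalf : ∀ (x : X) (r : ℝ), 0 < r → lam x r ≤ Cl * lam x (r / 2))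
    (m : ℕ) (x : X) (r s : ℝ) (hr : 0 < r) (hrs : r ≤ s) (hs : s ≤ 2 ^ m * r) :
    (μ (ball x r)).toReal / lam x r ≤ Cl ^ m * ((μ (ball x s)).toReal / lam x s) := by
  have hs0 : 0 < s := hr.trans_le hrs
  have h1 : lam x s ≤ Cl ^ m * lam x r := by
    calc lam x s ≤ Cl ^ m * lam x (s / 2 ^ m) := lam_iter lam Cl hCl hhalf m x s hs0
      _ ≤ Cl ^ m * lam x r := by
          apply mul_le_mul_of_nonneg_left _ (by positivity)
          exact hlam_mono x _ r (by positivity) (by rw [div_le_iff₀ (by positivity)]; linarith)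
  have hμ : (μ (ball x r)).toReal ≤ (μ (ball x s)).toReal := by
    have hfin : μ (ball x s) ≠ ⊤ :=
      ne_top_of_le_ne_top ENNReal.ofReal_ne_top (hud x s hs0)
    exact ENNReal.toReal_mono hfin (measure_mono (ball_subset_ball hrs))
  have hlr := hlam_pos x r hr
  have hls := hlam_pos x s hs0
  rw [mul_div_assoc', div_le_div_iff₀ hlr hls]
  nlinarith [ENNReal.toReal_nonneg (a := μ (ball x r)), ENNReal.toReal_nonneg (a := μ (ball x s))]

lemma g_le_one (μ : Measure X) (lam : X → ℝ → ℝ)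
    (hlam_pos : ∀ (x : X) (r : ℝ), 0 < r → 0 < lam x r)
    (hud : ∀ (x : X) (r : ℝ), 0 < r → μ (Metric.ball x r) ≤ ENNReal.ofReal (lam x r))
    (x : X) (r : ℝ) (hr : 0 < r) :
    (μ (ball x r)).toReal / lam x r ≤ 1 := by
  rw [div_le_one (hlam_pos x r hr)]
  exact ENNReal.toReal_le_of_le_ofReal (hlam_pos x r hr).le (hud x r hr)

lemma Kp_le (μ : Measure X) (lam : X → ℝ → ℝ) (Cl : ℝ) (hCl : 1 ≤ Cl)
    (hlam_pos : ∀ (x : X) (r : ℝ), 0 < r → 0 < lam x r)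
    (hlam_mono : ∀ (x : X) (r s : ℝ), 0 < r → r ≤ s → lam x r ≤ lam x s)
    (hud : ∀ (x : X) (r : ℝ), 0 < r → μ (Metric.ball x r) ≤ ENNReal.ofReal (lam x r))
    (hhalf : ∀ (x : X) (r : ℝ), 0 < r → lam x r ≤ Cl * lam x (r / 2))
    (ρ₁ ρ₂ p : ℝ) (hρ₁ : 1 < ρ₁) (hρ₂ : 1 < ρ₂) (hp : 0 < p) (hp1 : p ≤ 1) :
    ∃ C : ℝ, 0 < C ∧ ∀ (cB : X) (rB rS : ℝ), 0 < rB → 0 < rS →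
      Kp μ lam ρ₁ p cB rB rS ≤ C * Kp μ lam ρ₂ p cB rB rS := by
  have hρ₁0 : (0:ℝ) < ρ₁ := lt_trans one_pos hρ₁
  have hρ₂0 : (0:ℝ) < ρ₂ := lt_trans one_pos hρ₂
  have hlog₁ : 0 < Real.log ρ₁ := Real.log_pos hρ₁
  have hlog₂ : 0 < Real.log ρ₂ := Real.log_pos hρ₂
  set α := Real.logb ρ₂ ρ₁ with hαdef
  have hα : 0 < α := Real.logb_pos hρ₂ hρ₁
  set m : ℕ := ⌈Real.logb 2 ρ₂⌉₊ with hmdef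
  set M : ℕ := (2 * ⌊1/α⌋ + 1).toNat with hMdef
  refine ⟨3 + (Cl ^ m) ^ p * M, by positivity, ?_⟩
  intro cB rB rS hrB hrS
  set K := (Cl ^ m) ^ p with hKdef
  have hK0 : 0 ≤ K := by positivity
  set t₁ : ℤ → ℝ := fun k =>
    ((μ (Metric.ball cB (ρ₁ ^ k * rB))).toReal / lam cB (ρ₁ ^ k * rB)) ^ p with ht₁
  set t₂ : ℤ → ℝ := fun k =>
    ((μ (Metric.ball cB (ρ₂ ^ k * rB))).toReal / lam cB (ρ₂ ^ k * rB)) ^ p with ht₂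
  set f : ℤ → ℤ := fun k => ⌈(k:ℝ) * α⌉ with hfdef
  set I₁ := Finset.Icc (-⌊Real.logb ρ₁ 2⌋) (Ndisc ρ₁ rB rS) with hI₁
  set I₂ := Finset.Icc (-⌊Real.logb ρ₂ 2⌋) (Ndisc ρ₂ rB rS) with hI₂
  have ht₁nonneg : ∀ k, 0 ≤ t₁ k := fun k =>
    Real.rpow_nonneg (div_nonneg ENNReal.toReal_nonneg
      (hlam_pos cB _ (by positivity)).le) p
  have ht₂nonneg : ∀ k, 0 ≤ t₂ k := fun k =>
    Real.rpow_nonneg (div_nonneg ENNReal.toReal_nonneg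
      (hlam_pos cB _ (by positivity)).le) p
  have ht₁le1 : ∀ k, t₁ k ≤ 1 := by
    intro k
    apply Real.rpow_le_one (div_nonneg ENNReal.toReal_nonneg (hlam_pos cB _ (by positivity)).le)
      (g_le_one μ lam hlam_pos hud cB _ (by positivity)) hp.le
  have hpow : ∀ k : ℤ, (ρ₁:ℝ) ^ k = ρ₂ ^ ((k:ℝ) * α) := by
    intro k
    have : ρ₂ ^ ((k:ℝ) * α) = ρ₁ ^ k := by
      rw [mul_comm, Real.rpow_mul hρ₂0.le, Real.rpow_logb hρ₂0 (ne_of_gt hρ₂) hρ₁0,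
        Real.rpow_intCast]
    exact this.symm
  have h2m : ρ₂ ≤ (2:ℝ) ^ m := by
    calc ρ₂ = (2:ℝ) ^ (Real.logb 2 ρ₂) := (Real.rpow_logb two_pos (by norm_num) hρ₂0).symm
      _ ≤ (2:ℝ) ^ ((m:ℕ):ℝ) := Real.rpow_le_rpow_of_exponent_le one_le_two (Nat.le_ceil _)
      _ = (2:ℝ) ^ m := Real.rpow_natCast 2 m
  have step : ∀ k : ℤ, t₁ k ≤ K * t₂ (f k) := by
    intro k
    have hle : (ρ₁:ℝ) ^ k ≤ ρ₂ ^ (f k) := by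
      rw [hpow k, ← Real.rpow_intCast ρ₂ (f k)]
      exact Real.rpow_le_rpow_of_exponent_le hρ₂.le (Int.le_ceil _)
    have hle2 : (ρ₂:ℝ) ^ (f k) ≤ 2 ^ m * ρ₁ ^ k := by
      have h1 : ((f k : ℤ):ℝ) ≤ (k:ℝ) * α + 1 := (Int.ceil_lt_add_one ((k:ℝ) * α)).le
      calc (ρ₂:ℝ) ^ (f k) = ρ₂ ^ (((f k : ℤ)):ℝ) := (Real.rpow_intCast _ _).symm
        _ ≤ ρ₂ ^ ((k:ℝ) * α + 1) := Real.rpow_le_rpow_of_exponent_le hρ₂.le h1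
        _ = ρ₂ ^ ((k:ℝ) * α) * ρ₂ := by rw [Real.rpow_add hρ₂0, Real.rpow_one]
        _ = ρ₁ ^ k * ρ₂ := by rw [hpow k]
        _ ≤ ρ₁ ^ k * 2 ^ m := mul_le_mul_of_nonneg_left h2m (zpow_pos hρ₁0 k).le
        _ = 2 ^ m * ρ₁ ^ k := mul_comm _ _
    have hg := g_doubling μ lam Cl hCl hlam_pos hlam_mono hud hhalf m cB
      (ρ₁ ^ k * rB) (ρ₂ ^ (f k) * rB) (by positivity)
      (mul_le_mul_of_nonneg_right hle hrB.le)
      (by rw [← mul_assoc]; exact mul_le_mul_of_nonneg_right hle2 hrB.le)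
    have hgr0 : 0 ≤ (μ (Metric.ball cB (ρ₁ ^ k * rB))).toReal / lam cB (ρ₁ ^ k * rB) :=
      div_nonneg ENNReal.toReal_nonneg (hlam_pos cB _ (by positivity)).le
    have hgs0 : 0 ≤ (μ (Metric.ball cB (ρ₂ ^ (f k) * rB))).toReal / lam cB (ρ₂ ^ (f k) * rB) :=
      div_nonneg ENNReal.toReal_nonneg (hlam_pos cB _ (by positivity)).le
    calc t₁ k ≤ (Cl ^ m * ((μ (Metric.ball cB (ρ₂ ^ (f k) * rB))).toReal
          / lam cB (ρ₂ ^ (f k) * rB))) ^ p := Real.rpow_le_rpow hgr0 hg hp.le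
      _ = K * t₂ (f k) := by rw [Real.mul_rpow (by positivity) hgs0]
  -- lower edge is automatic
  have hL : ∀ k ∈ I₁, -⌊Real.logb ρ₂ 2⌋ ≤ f k := by
    intro k hk
    rw [hI₁, Finset.mem_Icc] at hk
    have key : Real.logb ρ₁ 2 * α = Real.logb ρ₂ 2 := by
      rw [hαdef]; unfold Real.logb; field_simp
    have h1 : -Real.logb ρ₂ 2 ≤ (k:ℝ) * α := by
      have h2 : (⌊Real.logb ρ₁ 2⌋ : ℝ) ≤ Real.logb ρ₁ 2 := Int.floor_le _
      have h3 : (-⌊Real.logb ρ₁ 2⌋ : ℝ) ≤ (k:ℝ) := by exact_mod_cast hk.1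
      nlinarith
    have := Int.ceil_le_ceil h1
    rwa [Int.ceil_neg] at this
  -- split
  set S := I₁.filter (fun k => f k ∈ I₂) with hS
  set O := I₁.filter (fun k => ¬ f k ∈ I₂) with hO
  have hsplit : ∑ k ∈ I₁, t₁ k = ∑ k ∈ S, t₁ k + ∑ k ∈ O, t₁ k :=
    (Finset.sum_filter_add_sum_filter_not I₁ _ t₁).symm
  -- O bound
  have hOsub : O ⊆ Finset.Icc (⌊((Ndisc ρ₂ rB rS : ℤ):ℝ)/α⌋ + 1) (Ndisc ρ₁ rB rS) := by
    intro k hk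
    rw [hO, Finset.mem_filter] at hk
    obtain ⟨hkI, hkn⟩ := hk
    have hkI' := hkI
    rw [hI₁, Finset.mem_Icc] at hkI'
    have hfk : Ndisc ρ₂ rB rS < f k := by
      by_contra hcon
      push_neg at hcon
      apply hkn
      rw [hI₂, Finset.mem_Icc]
      exact ⟨hL k hkI, hcon⟩
    have h1 : ((Ndisc ρ₂ rB rS : ℤ):ℝ) < (k:ℝ) * α := Int.lt_ceil.mp hfk
    have h2 : ((Ndisc ρ₂ rB rS : ℤ):ℝ)/α < (k:ℝ) := by
      rw [div_lt_iff₀ hα]; linarith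
    rw [Finset.mem_Icc]
    exact ⟨Int.add_one_le_iff.mpr (Int.floor_lt.mpr h2), hkI'.2⟩
  have hOsum : ∑ k ∈ O, t₁ k ≤ 2 := by
    have hcard2 : (Finset.Icc (⌊((Ndisc ρ₂ rB rS : ℤ):ℝ)/α⌋ + 1) (Ndisc ρ₁ rB rS)).card ≤ 2 := by
      rw [Int.card_Icc]
      apply Int.toNat_le.mpr
      have hfl : (Ndisc ρ₁ rB rS : ℤ) - 2 ≤ ⌊((Ndisc ρ₂ rB rS : ℤ):ℝ)/α⌋ := by
        apply Int.le_floor.mpr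
        push_cast
        have key : Real.logb ρ₂ (rS/rB) / α = Real.logb ρ₁ (rS/rB) := by
          rw [hαdef]; unfold Real.logb; field_simp
        have h1 : ((Ndisc ρ₁ rB rS : ℤ):ℝ) < Real.logb ρ₁ (rS/rB) + 1 :=
          Int.ceil_lt_add_one _
        have h2 : Real.logb ρ₂ (rS/rB) ≤ ((Ndisc ρ₂ rB rS : ℤ):ℝ) := Int.le_ceil _
        have h3 : Real.logb ρ₂ (rS/rB) / α ≤ ((Ndisc ρ₂ rB rS : ℤ):ℝ) / α := by gcongr
        push_cast at h1 h2 h3 ⊢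
        linarith [key ▸ h3]
      omega
    calc ∑ k ∈ O, t₁ k ≤ ∑ k ∈ O, 1 := Finset.sum_le_sum (fun k _ => ht₁le1 k)
      _ = (O.card : ℝ) := by simp
      _ ≤ 2 := by
          have := le_trans (Finset.card_le_card hOsub) hcard2
          exact_mod_cast this
  -- fiber bound
  have fiber_card : ∀ j : ℤ, (I₁.filter (fun k => f k = j)).card ≤ M := by
    intro j
    rcases (I₁.filter (fun k => f k = j)).eq_empty_or_nonempty with h | h
    · simp [h]
    · obtain ⟨k₀, hk₀⟩ := h
      have hk₀j : f k₀ = j := (Finset.mem_filter.mp hk₀).2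
      have hup : ∀ k' : ℤ, f k' = j → (k':ℝ) * α ≤ j := by
        intro k' h'
        exact Int.ceil_le.mp (le_of_eq h')
      have hdn : ∀ k' : ℤ, f k' = j → (j:ℝ) - 1 < (k':ℝ) * α := by
        intro k' h'
        have h2 : (j - 1 : ℤ) < ⌈(k':ℝ) * α⌉ := by rw [hfdef] at h'; simp only at h'; omega
        have := Int.lt_ceil.mp h2
        push_cast at this; linarith
      have hsub : I₁.filter (fun k => f k = j) ⊆ Finset.Icc (k₀ - ⌊1/α⌋) (k₀ + ⌊1/α⌋) := by
        intro k hk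
        have hkj : f k = j := (Finset.mem_filter.mp hk).2
        have h1 := hup k hkj; have h2 := hdn k hkj
        have h3 := hup k₀ hk₀j; have h4 := hdn k₀ hk₀j
        rw [Finset.mem_Icc]
        constructor
        · have h5 : ((k₀ - k : ℤ):ℝ) ≤ 1/α := by
            rw [le_div_iff₀ hα]; push_cast; nlinarith
          have := Int.le_floor.mpr h5
          omega
        · have h5 : ((k - k₀ : ℤ):ℝ) ≤ 1/α := by
            rw [le_div_iff₀ hα]; push_cast; nlinarith
          have := Int.le_floor.mpr h5
          omega
      calc (I₁.filter (fun k => f k = j)).card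
          ≤ (Finset.Icc (k₀ - ⌊1/α⌋) (k₀ + ⌊1/α⌋)).card := Finset.card_le_card hsub
        _ = (k₀ + ⌊1/α⌋ + 1 - (k₀ - ⌊1/α⌋)).toNat := Int.card_Icc _ _
        _ ≤ M := by rw [hMdef]; omega
  -- S bound
  have hmaps : ∀ k ∈ S, f k ∈ I₂ := fun k hk => (Finset.mem_filter.mp hk).2
  have hS2 : ∑ k ∈ S, t₂ (f k) ≤ (M:ℝ) * ∑ j ∈ I₂, t₂ j := by
    rw [← Finset.sum_fiberwise_of_maps_to hmaps (fun k => t₂ (f k)), Finset.mul_sum]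
    apply Finset.sum_le_sum
    intro j hj
    calc ∑ k ∈ S.filter (fun k => f k = j), t₂ (f k)
        = ∑ k ∈ S.filter (fun k => f k = j), t₂ j :=
          Finset.sum_congr rfl (fun k hk => by rw [(Finset.mem_filter.mp hk).2])
      _ = ((S.filter (fun k => f k = j)).card : ℝ) * t₂ j := by
          rw [Finset.sum_const, nsmul_eq_mul]
      _ ≤ (M:ℝ) * t₂ j := by
          apply mul_le_mul_of_nonneg_right _ (ht₂nonneg j)
          have hc : (S.filter (fun k => f k = j)).card ≤ M := by
            refine le_trans (Finset.card_le_card ?_) (fiber_card j)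
            exact Finset.filter_subset_filter _ (Finset.filter_subset _ _)
          exact_mod_cast hc
  have hSsum : ∑ k ∈ S, t₁ k ≤ K * ((M:ℝ) * ∑ j ∈ I₂, t₂ j) := by
    calc ∑ k ∈ S, t₁ k ≤ ∑ k ∈ S, K * t₂ (f k) := Finset.sum_le_sum (fun k _ => step k)
      _ = K * ∑ k ∈ S, t₂ (f k) := by rw [Finset.mul_sum]
      _ ≤ K * ((M:ℝ) * ∑ j ∈ I₂, t₂ j) := mul_le_mul_of_nonneg_left hS2 hK0
  -- assembly
  have hs₂0 : 0 ≤ ∑ j ∈ I₂, t₂ j := Finset.sum_nonneg (fun j _ => ht₂nonneg j)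
  have e1 : Kp μ lam ρ₁ p cB rB rS = 1 + ∑ k ∈ I₁, t₁ k := rfl
  have e2 : Kp μ lam ρ₂ p cB rB rS = 1 + ∑ j ∈ I₂, t₂ j := rfl
  rw [e1, e2, hsplit]
  have hM0 : (0:ℝ) ≤ (M:ℝ) := Nat.cast_nonneg M
  nlinarith [mul_nonneg hK0 hM0, mul_nonneg (mul_nonneg hK0 hM0) hs₂0]


lemma Kp_nonneg' (μ : Measure X) (lam : X → ℝ → ℝ)
    (hlam_pos : ∀ (x : X) (r : ℝ), 0 < r → 0 < lam x r)
    (ρ p : ℝ) (hρ : 0 < ρ) (cB : X) (rB rS : ℝ) (hrB : 0 < rB) :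
    0 ≤ Kp μ lam ρ p cB rB rS := by
  unfold Kp
  have : 0 ≤ ∑ k ∈ Finset.Icc (-⌊Real.logb ρ 2⌋) (Ndisc ρ rB rS),
      ((μ (Metric.ball cB (ρ ^ k * rB))).toReal / lam cB (ρ ^ k * rB)) ^ p := by
    apply Finset.sum_nonneg
    intro k _
    exact Real.rpow_nonneg (div_nonneg ENNReal.toReal_nonneg
      (hlam_pos cB _ (by positivity)).le) p
  linarith

end Aux

/-- Lemma 2.9: for `ρ₁, ρ₂ ∈ (1,∞)` and `p ∈ (0,1]`, the discrete coefficients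
`K̃^{(ρ₁),p}_{B,S}` and `K̃^{(ρ₂),p}_{B,S}` are uniformly comparable over all balls `B ⊆ S`. -/
theorem Kp_equiv_of_base {X : Type*} [MetricSpace X] [MeasurableSpace X]
    (μ : Measure X) (lam : X → ℝ → ℝ) (Cl : ℝ) (hCl : 1 ≤ Cl)
    (hlam_pos : ∀ (x : X) (r : ℝ), 0 < r → 0 < lam x r)
    (hlam_mono : ∀ (x : X) (r s : ℝ), 0 < r → r ≤ s → lam x r ≤ lam x s)
    (hud : ∀ (x : X) (r : ℝ), 0 < r → μ (Metric.ball x r) ≤ ENNReal.ofReal (lam x r))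
    (hhalf : ∀ (x : X) (r : ℝ), 0 < r → lam x r ≤ Cl * lam x (r / 2))
    (ρ₁ ρ₂ p : ℝ) (hρ₁ : 1 < ρ₁) (hρ₂ : 1 < ρ₂) (hp : 0 < p) (hp1 : p ≤ 1) :
    ∃ c C : ℝ, 0 < c ∧ 0 < C ∧ ∀ (cB cS : X) (rB rS : ℝ),
      0 < rB → 0 < rS → Metric.ball cB rB ⊆ Metric.ball cS rS →
      c * (Kp μ lam ρ₂ p cB rB rS) ^ (1/p) ≤ (Kp μ lam ρ₁ p cB rB rS) ^ (1/p) ∧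
      (Kp μ lam ρ₁ p cB rB rS) ^ (1/p) ≤ C * (Kp μ lam ρ₂ p cB rB rS) ^ (1/p) := by
  obtain ⟨C₁, hC₁, h₁⟩ :=
    Kp_le μ lam Cl hCl hlam_pos hlam_mono hud hhalf ρ₁ ρ₂ p hρ₁ hρ₂ hp hp1
  obtain ⟨C₂, hC₂, h₂⟩ :=
    Kp_le μ lam Cl hCl hlam_pos hlam_mono hud hhalf ρ₂ ρ₁ p hρ₂ hρ₁ hp hp1
  refine ⟨(C₂ ^ (1/p))⁻¹, C₁ ^ (1/p),
    inv_pos.mpr (Real.rpow_pos_of_pos hC₂ _), Real.rpow_pos_of_pos hC₁ _, ?_⟩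
  intro cB cS rB rS hrB hrS _
  have hρ₁0 : (0:ℝ) < ρ₁ := lt_trans one_pos hρ₁
  have hρ₂0 : (0:ℝ) < ρ₂ := lt_trans one_pos hρ₂
  have hK₁0 : 0 ≤ Kp μ lam ρ₁ p cB rB rS := Kp_nonneg' μ lam hlam_pos ρ₁ p hρ₁0 cB rB rS hrB
  have hK₂0 : 0 ≤ Kp μ lam ρ₂ p cB rB rS := Kp_nonneg' μ lam hlam_pos ρ₂ p hρ₂0 cB rB rS hrB
  have hpinv : (0:ℝ) ≤ 1/p := by positivity
  constructor
  · have h := Real.rpow_le_rpow hK₂0 (h₂ cB rB rS hrB hrS) hpinv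
    rw [Real.mul_rpow hC₂.le hK₁0] at h
    calc (C₂ ^ (1/p))⁻¹ * Kp μ lam ρ₂ p cB rB rS ^ (1/p)
        ≤ (C₂ ^ (1/p))⁻¹ * (C₂ ^ (1/p) * Kp μ lam ρ₁ p cB rB rS ^ (1/p)) := by
          apply mul_le_mul_of_nonneg_left h
          positivity
      _ = Kp μ lam ρ₁ p cB rB rS ^ (1/p) :=
          inv_mul_cancel_left₀ (ne_of_gt (Real.rpow_pos_of_pos hC₂ _)) _
  · have h := Real.rpow_le_rpow hK₁0 (h₁ cB rB rS hrB hrS) hpinv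
    rwa [Real.mul_rpow hC₁.le hK₂0] at h
end

section
/- Let $\rho\in(1,\infty)$, $p\in(0,1]$, $m\ge 2$ and $B=B_1\subset\cdots\subset B_m$ be concentric balls with radii of the form $\rho^{N_i}r_B$, $N_i\in\mathbb{Z}_+$ increasing. If $\widetilde K^{(\rho),p}_{B_i,B_{i+1}}>(3+\lfloor\log_\rho 2\rfloor)^{1/p}$ for all $i\in\{1,\dots,m-1\}$, then $\sum_{i=1}^{m-1}[\widetilde K^{(\rho),p}_{B_i,B_{i+1}}]^p<(3+\lfloor\log_\rho 2\rfloor)[\widetilde K^{(\rho),p}_{B_1,B_m}]^p$. -/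
open MeasureTheory Metric Real

/-- Lemma 6.11: for concentric balls `B = B₁ ⊆ ⋯ ⊆ B_m` with radii `ρ^{N_i} r_B`, if each
consecutive coefficient satisfies `K̃^{(ρ),p}_{B_i,B_{i+1}} > (3 + ⌊log_ρ 2⌋)^{1/p}`, then
`∑_{i=1}^{m-1} [K̃^{(ρ),p}_{B_i,B_{i+1}}]^p < (3 + ⌊log_ρ 2⌋) [K̃^{(ρ),p}_{B₁,B_m}]^p`. -/
theorem Kp_chain_sum_lt {X : Type*} [MetricSpace X] [MeasurableSpace X]
    (μ : Measure X) (lam : X → ℝ → ℝ)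
    (hlam_pos : ∀ (x : X) (r : ℝ), 0 < r → 0 < lam x r)
    (hlam_mono : ∀ (x : X) (r s : ℝ), 0 < r → r ≤ s → lam x r ≤ lam x s)
    (hud : ∀ (x : X) (r : ℝ), 0 < r → μ (Metric.ball x r) ≤ ENNReal.ofReal (lam x r))
    (ρ p : ℝ) (hρ : 1 < ρ) (hp : 0 < p) (hp1 : p ≤ 1)
    (c : X) (r : ℝ) (hr : 0 < r) (m : ℕ) (hm : 2 ≤ m)
    (N : ℕ → ℕ) (hN0 : N 0 = 0) (hmono : ∀ i, N i ≤ N (i + 1))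
    (hbig : ∀ i < m - 1,
      (((3 + ⌊Real.logb ρ 2⌋ : ℤ) : ℝ)) ^ (1/p)
        < (Kp μ lam ρ p c (ρ ^ (N i) * r) (ρ ^ (N (i + 1)) * r)) ^ (1/p)) :
    ∑ i ∈ Finset.range (m - 1), Kp μ lam ρ p c (ρ ^ (N i) * r) (ρ ^ (N (i + 1)) * r)
      < ((3 + ⌊Real.logb ρ 2⌋ : ℤ) : ℝ) *
          Kp μ lam ρ p c (ρ ^ (N 0) * r) (ρ ^ (N (m - 1)) * r) := by
  have hρ0 : (0:ℝ) < ρ := lt_trans one_pos hρ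
  set L : ℤ := ⌊Real.logb ρ 2⌋ with hLdef
  have hL0 : 0 ≤ L := Int.floor_nonneg.2 (Real.logb_nonneg hρ one_le_two)
  set f : ℤ → ℝ := fun j => ((μ (Metric.ball c (ρ ^ j * r))).toReal / lam c (ρ ^ j * r)) ^ p
    with hfdef
  have hrpos : ∀ j : ℤ, 0 < ρ ^ j * r := fun j => mul_pos (zpow_pos hρ0 j) hr
  have hf0 : ∀ j, 0 ≤ f j := fun j => Real.rpow_nonneg
    (div_nonneg ENNReal.toReal_nonneg (hlam_pos c _ (hrpos j)).le) p
  have hf1 : ∀ j, f j ≤ 1 := by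
    intro j
    apply Real.rpow_le_one (div_nonneg ENNReal.toReal_nonneg (hlam_pos c _ (hrpos j)).le)
      _ hp.le
    rw [div_le_one (hlam_pos c _ (hrpos j))]
    exact ENNReal.toReal_le_of_le_ofReal (hlam_pos c _ (hrpos j)).le (hud c _ (hrpos j))
  have hlogρ : 0 < Real.log ρ := Real.log_pos hρ
  -- the key rewriting of Kp
  have hKp : ∀ a b : ℕ, Kp μ lam ρ p c (ρ ^ a * r) (ρ ^ b * r)
      = 1 + ∑ k ∈ Finset.Icc (-L) ((b:ℤ) - a), f (k + a) := by
    intro a b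
    have hNd : Ndisc ρ (ρ ^ a * r) (ρ ^ b * r) = (b:ℤ) - a := by
      unfold Ndisc
      have h1 : (ρ ^ b * r) / (ρ ^ a * r) = ρ ^ ((b:ℤ) - a) := by
        rw [zpow_sub₀ (ne_of_gt hρ0), zpow_natCast, zpow_natCast]
        field_simp
      rw [h1]
      have h2 : Real.logb ρ (ρ ^ ((b:ℤ) - a)) = ((b:ℤ) - a : ℤ) := by
        rw [Real.logb, Real.log_zpow, mul_div_assoc, ← Real.logb, Real.logb_self_eq_one hρ,
          mul_one]
      rw [h2, Int.ceil_intCast]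
    unfold Kp
    rw [hNd]
    congr 1
    apply Finset.sum_congr rfl
    intro k _
    have h3 : ρ ^ k * (ρ ^ a * r) = ρ ^ (k + (a:ℤ)) * r := by
      rw [zpow_add₀ (ne_of_gt hρ0), zpow_natCast]; ring
    rw [h3]
  have hmonoN : Monotone N := monotone_nat_of_le_succ hmono
  -- the "big part" of each coefficient
  set g : ℕ → ℝ := fun i => ∑ j ∈ Finset.Ioc ((N i : ℤ)) ((N (i+1) : ℤ)), f j with hgdef
  have hsplit : ∀ i : ℕ, Kp μ lam ρ p c (ρ ^ (N i) * r) (ρ ^ (N (i+1)) * r)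
      = 1 + (∑ k ∈ Finset.Icc (-L) 0, f (k + N i)) + g i := by
    intro i
    rw [hKp]
    have hD : (0:ℤ) ≤ (N (i+1) : ℤ) - N i := by
      have := hmono i; omega
    have hU : Finset.Icc (-L) ((N (i+1):ℤ) - N i)
        = Finset.Icc (-L) 0 ∪ Finset.Ioc 0 ((N (i+1):ℤ) - N i) := by
      ext x
      simp only [Finset.mem_Icc, Finset.mem_union, Finset.mem_Ioc]
      omega
    have hdisj : Disjoint (Finset.Icc (-L) (0:ℤ))
        (Finset.Ioc 0 ((N (i+1):ℤ) - N i)) := by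
      rw [Finset.disjoint_left]
      intro x hx hx'
      simp only [Finset.mem_Icc, Finset.mem_Ioc] at hx hx'
      omega
    rw [hU, Finset.sum_union hdisj, ← add_assoc]
    congr 1
    -- reindex the upper part
    have : Finset.Ioc ((N i : ℤ)) ((N (i+1) : ℤ))
        = Finset.map (addRightEmbedding (N i : ℤ)) (Finset.Ioc 0 ((N (i+1):ℤ) - N i)) := by
      rw [Finset.map_add_right_Ioc]
      congr 1 <;> omega
    rw [hgdef]
    simp only []
    rw [this, Finset.sum_map]
    rfl
  -- the lower part is at most L + 1
  have hlow : ∀ i : ℕ, (∑ k ∈ Finset.Icc (-L) 0, f (k + N i)) ≤ (L : ℝ) + 1 := by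
    intro i
    calc (∑ k ∈ Finset.Icc (-L) 0, f (k + N i))
        ≤ (Finset.Icc (-L) (0:ℤ)).card • (1:ℝ) :=
          Finset.sum_le_card_nsmul _ _ _ (fun k _ => hf1 _)
      _ = ((Finset.Icc (-L) (0:ℤ)).card : ℝ) := by rw [nsmul_eq_mul, mul_one]
      _ = (L : ℝ) + 1 := by
          rw [Int.card_Icc]
          rw [show ((0:ℤ) + 1 - -L) = L + 1 by ring]
          have h := Int.toNat_of_nonneg (show (0:ℤ) ≤ L + 1 by omega)
          have h2 : (((L+1).toNat : ℤ) : ℝ) = ((L : ℝ) + 1) := by rw [h]; push_cast; ring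
          exact_mod_cast h2
  have hlow0 : ∀ i : ℕ, 0 ≤ (∑ k ∈ Finset.Icc (-L) 0, f (k + N i)) :=
    fun i => Finset.sum_nonneg (fun k _ => hf0 _)
  have hg0 : ∀ i, 0 ≤ g i := fun i => Finset.sum_nonneg (fun j _ => hf0 j)
  -- convert hbig into a bare inequality
  have hbig' : ∀ i < m - 1, ((3:ℝ) + L)
      < Kp μ lam ρ p c (ρ ^ (N i) * r) (ρ ^ (N (i+1)) * r) := by
    intro i hi
    by_contra hcon
    push_neg at hcon
    have hKnn : 0 ≤ Kp μ lam ρ p c (ρ ^ (N i) * r) (ρ ^ (N (i+1)) * r) := by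
      rw [hKp]
      exact add_nonneg one_pos.le (Finset.sum_nonneg fun k _ => hf0 _)
    have := Real.rpow_le_rpow hKnn hcon (by positivity : (0:ℝ) ≤ 1/p)
    have hb := hbig i hi
    push_cast at hb
    exact absurd (lt_of_lt_of_le hb this) (lt_irrefl _)
  -- each g i > 1
  have hg1 : ∀ i < m - 1, 1 < g i := by
    intro i hi
    have h1 := hbig' i hi
    rw [hsplit i] at h1
    have h2 := hlow i
    linarith
  -- each Kp_i < (L + 3) * g i
  have hKlt : ∀ i < m - 1, Kp μ lam ρ p c (ρ ^ (N i) * r) (ρ ^ (N (i+1)) * r)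
      < ((L:ℝ) + 3) * g i := by
    intro i hi
    rw [hsplit i]
    have h1 := hg1 i hi
    have h2 := hlow i
    have hL0' : (0:ℝ) ≤ L := by exact_mod_cast hL0
    nlinarith [hg0 i]
  -- telescoping
  have hcons : ∀ (a b d : ℤ), a ≤ b → b ≤ d →
      ∑ j ∈ Finset.Ioc a b, f j + ∑ j ∈ Finset.Ioc b d, f j = ∑ j ∈ Finset.Ioc a d, f j := by
    intro a b d h1 h2
    rw [← Finset.Ioc_union_Ioc_eq_Ioc h1 h2, Finset.sum_union]
    rw [Finset.disjoint_left]
    intro x hx hx'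
    simp only [Finset.mem_Ioc] at hx hx'
    omega
  have htel : ∀ n : ℕ, ∑ i ∈ Finset.range n, g i
      = ∑ j ∈ Finset.Ioc ((N 0 : ℤ)) ((N n : ℤ)), f j := by
    intro n
    induction n with
    | zero => simp
    | succ n ih =>
      rw [Finset.sum_range_succ, ih, hgdef]
      exact hcons _ _ _ (by exact_mod_cast hmonoN (Nat.zero_le n))
        (by exact_mod_cast hmono n)
  have hne : (Finset.range (m-1)).Nonempty := by
    rw [Finset.nonempty_range_iff]; omega
  have hstep : ∑ i ∈ Finset.range (m-1),
        Kp μ lam ρ p c (ρ ^ (N i) * r) (ρ ^ (N (i+1)) * r)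
      < ((L:ℝ) + 3) * ∑ i ∈ Finset.range (m-1), g i := by
    rw [Finset.mul_sum]
    exact Finset.sum_lt_sum_of_nonempty hne (fun i hi =>
      hKlt i (Finset.mem_range.1 hi))
  have hfull : ((L:ℝ) + 3) * ∑ i ∈ Finset.range (m-1), g i
      ≤ ((L:ℝ) + 3) * Kp μ lam ρ p c (ρ ^ (N 0) * r) (ρ ^ (N (m-1)) * r) := by
    apply mul_le_mul_of_nonneg_left _ (by positivity)
    rw [htel, hKp, hN0]
    have hsub : Finset.Ioc ((0:ℤ)) ((N (m-1) : ℤ)) ⊆ Finset.Icc (-L) ((N (m-1):ℤ) - 0) := by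
      intro x hx
      simp only [Finset.mem_Ioc] at hx
      simp only [Finset.mem_Icc]
      omega
    have : ∑ j ∈ Finset.Ioc ((0:ℤ)) ((N (m-1) : ℤ)), f j
        ≤ ∑ k ∈ Finset.Icc (-L) ((N (m-1):ℤ) - 0), f (k + (0:ℕ)) := by
      have heq : ∀ k : ℤ, f (k + ((0:ℕ):ℤ)) = f k := by intro k; norm_num
      calc ∑ j ∈ Finset.Ioc ((0:ℤ)) ((N (m-1) : ℤ)), f j
          ≤ ∑ k ∈ Finset.Icc (-L) ((N (m-1):ℤ) - 0), f k :=
            Finset.sum_le_sum_of_subset_of_nonneg hsub (fun k _ _ => hf0 k)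
        _ = _ := by exact Finset.sum_congr rfl (fun k _ => (heq k).symm)
    push_cast at this ⊢
    linarith
  have := lt_of_lt_of_le hstep hfull
  push_cast
  calc ∑ i ∈ Finset.range (m - 1), Kp μ lam ρ p c (ρ ^ (N i) * r) (ρ ^ (N (i+1)) * r)
      < ((L:ℝ) + 3) * Kp μ lam ρ p c (ρ ^ (N 0) * r) (ρ ^ (N (m-1)) * r) := this
    _ = (3 + (L:ℝ)) * Kp μ lam ρ p c (ρ ^ (N 0) * r) (ρ ^ (N (m-1)) * r) := by ring
end

section
/- Let $\mu$ be the Gauss measure on $\mathbb{R}$ and $\beta_2>1$ a fixed constant. For every $m\in\mathbb{N}$ there exists a ball $B$ such that none of the balls $2^jB$, $j\in\{0,\dots,m\}$, is $(2,\beta_2)$-doubling; consequently $N^{(2)}_{B,\widetilde B^{2}}>m$, where $\widetilde B^{2}=2^{N}B$ with $N$ the smallest nonnegative integer making $2^NB$ $(2,\beta_2)$-doubling. In particular, the Gauss measure does not satisfy the $2$-weakly doubling condition. -/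
open MeasureTheory Metric Real

/-- The Gauss measure on `ℝ`, `dμ(x) = π^{-1/2} e^{-x²} dx`. -/
noncomputable def gaussMeasure : Measure ℝ :=
  volume.withDensity (fun x => ENNReal.ofReal ((Real.sqrt Real.pi)⁻¹ * Real.exp (-x ^ 2)))

/-!
Far from the origin the Gauss density decays so fast that a ball `B = B(X, R)` with `X ≥ 2R`
satisfies `μ(2B) ≥ ¼ e^{R(X - 5R/4)} μ(B)`. Centring the unit ball far enough out, at
`X = 4 (2^m + |β₂|)`, makes every dilate `2^j B`, `j ≤ m`, fail to be `(2, β₂)`-doubling, so no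
uniform bound on the number of dilations needed to reach a doubling ball can exist.
-/

noncomputable def gaussDensity (x : ℝ) : ℝ := (√π)⁻¹ * exp (-x ^ 2)

lemma gaussMeasure_eq_withDensity :
    gaussMeasure = volume.withDensity fun x => ENNReal.ofReal (gaussDensity x) := rfl

lemma gaussDensity_pos (x : ℝ) : 0 < gaussDensity x := by
  unfold gaussDensity; positivity

lemma gaussDensity_le_gaussDensity {s t : ℝ} (hs : 0 ≤ s) (hst : s ≤ t) :
    gaussDensity t ≤ gaussDensity s := by
  unfold gaussDensity
  gcongr

lemma integrable_gaussDensity : Integrable gaussDensity := by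
  have h := (integrable_exp_neg_mul_sq one_pos).const_mul (√π)⁻¹
  simp only [neg_mul, one_mul] at h
  exact h

instance : IsFiniteMeasure gaussMeasure :=
  isFiniteMeasure_withDensity_ofReal integrable_gaussDensity.hasFiniteIntegral

lemma gaussMeasure_toReal_eq_integral {s : Set ℝ} (hs : MeasurableSet s) :
    (gaussMeasure s).toReal = ∫ t in s, gaussDensity t := by
  rw [gaussMeasure_eq_withDensity, withDensity_apply _ hs,
    ← ofReal_integral_eq_lintegral_ofReal integrable_gaussDensity.integrableOn
      (.of_forall fun t => (gaussDensity_pos t).le),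
    ENNReal.toReal_ofReal (setIntegral_nonneg hs fun t _ => (gaussDensity_pos t).le)]

lemma gaussMeasure_ball_toReal_pos (x : ℝ) {r : ℝ} (hr : 0 < r) :
    0 < (gaussMeasure (ball x r)).toReal := by
  refine ENNReal.toReal_pos ?_ (measure_ne_top _ _)
  rw [gaussMeasure_eq_withDensity, Ne,
    withDensity_apply_eq_zero' integrable_gaussDensity.aemeasurable.ennreal_ofReal]
  simp only [ne_eq, ENNReal.ofReal_eq_zero, not_le, gaussDensity_pos, Set.ofPred_true,
    Set.univ_inter]
  exact (measure_ball_pos volume x hr).ne'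

lemma gaussMeasure_Ioo_toReal_le {a b : ℝ} (ha : 0 ≤ a) (hab : a ≤ b) :
    (gaussMeasure (Set.Ioo a b)).toReal ≤ (b - a) * gaussDensity a := by
  rw [gaussMeasure_toReal_eq_integral measurableSet_Ioo]
  calc ∫ t in Set.Ioo a b, gaussDensity t
      ≤ ∫ _ in Set.Ioo a b, gaussDensity a :=
        setIntegral_mono_on integrable_gaussDensity.integrableOn
          (integrableOn_const (by simp)) measurableSet_Ioo
          fun t ht => gaussDensity_le_gaussDensity ha ht.1.le
    _ = (b - a) * gaussDensity a := by
        rw [setIntegral_const, Real.volume_real_Ioo_of_le hab, smul_eq_mul]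

lemma le_gaussMeasure_Ioo_toReal {a b : ℝ} (ha : 0 ≤ a) (hab : a ≤ b) :
    (b - a) * gaussDensity b ≤ (gaussMeasure (Set.Ioo a b)).toReal := by
  rw [gaussMeasure_toReal_eq_integral measurableSet_Ioo, ← Real.volume_real_Ioo_of_le hab,
    mul_comm]
  exact setIntegral_ge_of_const_le_real measurableSet_Ioo (by simp)
    (fun t ht => gaussDensity_le_gaussDensity (ha.trans ht.1.le) ht.2.le)
    integrable_gaussDensity.integrableOn

/-- Far out, `B(X, R)` lies where the density is at most `e^{-(X-R)²}`, while `B(X, 2R)` contains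
`(X - 2R, X - 3R/2)`, where it is at least `e^{-(X-3R/2)²} = e^{R(X - 5R/4)} e^{-(X-R)²}`. -/
lemma exp_mul_gaussMeasure_ball_le {X R : ℝ} (hR : 0 < R) (hX : 2 * R ≤ X) :
    exp (R * (X - 5 / 4 * R)) * (gaussMeasure (ball X R)).toReal
      ≤ 4 * (gaussMeasure (ball X (2 * R))).toReal := by
  have hsmall : (gaussMeasure (ball X R)).toReal ≤ 2 * R * gaussDensity (X - R) := by
    rw [Real.ball_eq_Ioo]
    convert gaussMeasure_Ioo_toReal_le (a := X - R) (b := X + R) (by linarith) (by linarith)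
      using 1
    ring
  have hbig : R / 2 * gaussDensity (X - 3 / 2 * R) ≤ (gaussMeasure (ball X (2 * R))).toReal := by
    calc R / 2 * gaussDensity (X - 3 / 2 * R)
        = (X - 3 / 2 * R - (X - 2 * R)) * gaussDensity (X - 3 / 2 * R) := by ring
      _ ≤ (gaussMeasure (Set.Ioo (X - 2 * R) (X - 3 / 2 * R))).toReal :=
        le_gaussMeasure_Ioo_toReal (by linarith) (by linarith)
      _ ≤ (gaussMeasure (ball X (2 * R))).toReal := by
        rw [Real.ball_eq_Ioo]
        exact ENNReal.toReal_mono (measure_ne_top _ _)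
          (measure_mono (Set.Ioo_subset_Ioo le_rfl (by linarith)))
  have hdensity :
      gaussDensity (X - 3 / 2 * R) = exp (R * (X - 5 / 4 * R)) * gaussDensity (X - R) := by
    unfold gaussDensity
    rw [mul_left_comm, ← exp_add]
    ring_nf
  calc exp (R * (X - 5 / 4 * R)) * (gaussMeasure (ball X R)).toReal
      ≤ exp (R * (X - 5 / 4 * R)) * (2 * R * gaussDensity (X - R)) := by gcongr
    _ = 4 * (R / 2 * gaussDensity (X - 3 / 2 * R)) := by rw [hdensity]; ring
    _ ≤ 4 * (gaussMeasure (ball X (2 * R))).toReal := by gcongr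

lemma gaussMeasure_ball_not_doubling {β X R : ℝ} (hR : 0 < R) (hX : 2 * R ≤ X)
    (hβ : 4 * β < exp (R * (X - 5 / 4 * R))) :
    β * (gaussMeasure (ball X R)).toReal < (gaussMeasure (ball X (2 * R))).toReal := by
  have hpos := gaussMeasure_ball_toReal_pos X hR
  nlinarith [exp_mul_gaussMeasure_ball_le hR hX]

/-- With centre `X = 4 (2^m + |β|)` and radius `R = 2^j ≤ 2^m`, `R (X - 5R/4) ≥ X - 5R/4 ≥ 4β`. -/
lemma exists_ball_forall_le_dilate_not_doubling (β : ℝ) (m : ℕ) :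
    ∃ x r : ℝ, 0 < r ∧ ∀ j ≤ m,
      β * (gaussMeasure (ball x (2 ^ j * r))).toReal
        < (gaussMeasure (ball x (2 ^ (j + 1) * r))).toReal := by
  refine ⟨4 * (2 ^ m + |β|), 1, one_pos, fun j hj => ?_⟩
  have hR : (1 : ℝ) ≤ 2 ^ j := one_le_pow₀ one_le_two
  have hRm : (2 : ℝ) ^ j ≤ 2 ^ m := pow_le_pow_right₀ one_le_two hj
  simp only [mul_one, pow_succ']
  refine gaussMeasure_ball_not_doubling (X := 4 * (2 ^ m + |β|)) (by positivity)
    (by nlinarith [abs_nonneg β]) ?_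
  calc 4 * β ≤ 2 ^ j * (4 * (2 ^ m + |β|) - 5 / 4 * 2 ^ j) := by
        nlinarith [le_abs_self β, abs_nonneg β]
    _ < _ := by linarith [add_one_le_exp (2 ^ j * (4 * (2 ^ m + |β|) - 5 / 4 * 2 ^ j))]

theorem gaussMeasure_not_weakly_doubling_general (β₂ : ℝ) :
    (∀ m : ℕ, ∃ (x r : ℝ), 0 < r ∧ ∀ j ≤ m,
      β₂ * (gaussMeasure (Metric.ball x ((2 : ℝ) ^ j * r))).toReal
        < (gaussMeasure (Metric.ball x ((2 : ℝ) ^ (j + 1) * r))).toReal) ∧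
    ¬ ∃ C1 : ℕ, ∀ (x r : ℝ), 0 < r → ∃ N : ℕ, N ≤ C1 ∧
      (gaussMeasure (Metric.ball x ((2 : ℝ) ^ (N + 1) * r))).toReal
        ≤ β₂ * (gaussMeasure (Metric.ball x ((2 : ℝ) ^ N * r))).toReal := by
  refine ⟨exists_ball_forall_le_dilate_not_doubling β₂, ?_⟩
  rintro ⟨C1, hC1⟩
  obtain ⟨x, r, hr, hnot⟩ := exists_ball_forall_le_dilate_not_doubling β₂ C1
  obtain ⟨N, hN, hdoubling⟩ := hC1 x r hr
  exact (hnot N hN).not_ge hdoubling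

/-- For the Gauss measure and any fixed `β₂ > 1`: for every `m` there is a ball `B` such that
none of `2^j B`, `0 ≤ j ≤ m`, is `(2,β₂)`-doubling; consequently the number of dilations needed
to reach a `(2,β₂)`-doubling ball is unbounded, so the `2`-weakly doubling condition fails. -/
theorem gaussMeasure_not_weakly_doubling (β₂ : ℝ) (hβ : 1 < β₂) :
    (∀ m : ℕ, ∃ (x r : ℝ), 0 < r ∧ ∀ j ≤ m,
      β₂ * (gaussMeasure (Metric.ball x ((2 : ℝ) ^ j * r))).toReal
        < (gaussMeasure (Metric.ball x ((2 : ℝ) ^ (j + 1) * r))).toReal) ∧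
    ¬ ∃ C1 : ℕ, ∀ (x r : ℝ), 0 < r → ∃ N : ℕ, N ≤ C1 ∧
      (gaussMeasure (Metric.ball x ((2 : ℝ) ^ (N + 1) * r))).toReal
        ≤ β₂ * (gaussMeasure (Metric.ball x ((2 : ℝ) ^ N * r))).toReal :=
  gaussMeasure_not_weakly_doubling_general β₂
end

section
/- Let $(\mathcal{X},d,\mu)$ be an RD-space with $\mu(\mathcal{X})=\infty$ and $q\in(1,\infty)$. For any ball $B(x_0,r_0)$ and any $\eta>0$, there exists a bounded-support Hölder function $h$ with $\mathrm{supp}(h)\subset\mathcal{X}\setminus B(x_0,r_0)$, $\int_{\mathcal{X}}h\,d\mu=1$, and $\|h\|_{L^q(\mu)}<\eta$. -/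
/-! The function equal to `1` on the annulus `r₀ + 1 ≤ d(x, x₀) ≤ R - 1`, vanishing outside
`r₀ < d(x, x₀) < R` and `1`-Lipschitz in between, has integral
`J ≥ μ(B(x₀, R - 1)) - μ(B̄(x₀, r₀ + 1))`, which tends to `∞` with `R` because `μ(X) = ∞` while
balls have finite measure. Dividing it by `J` normalizes the integral, and since it takes values in
`[0, 1]` its `L^q` norm is at most `J^{1/q}`, so the normalized function has `L^q` norm at most
`J^{1/q - 1}`, which tends to `0` because `q > 1`. -/

open MeasureTheory Metric Real Filter Set Topology

lemma tendsto_measureReal_ball_atTop {X : Type*} [PseudoMetricSpace X] [MeasurableSpace X]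
    {μ : Measure X} {x₀ : X} (hμ : μ univ = ⊤) (hfin : ∀ r, μ (ball x₀ r) ≠ ⊤) :
    Tendsto (fun r : ℝ => μ.real (ball x₀ r)) atTop atTop := by
  have hunion : (⋃ r : ℝ, ball x₀ r) = univ :=
    eq_univ_of_forall fun x => mem_iUnion.2 ⟨dist x x₀ + 1, by simp⟩
  have h := tendsto_measure_iUnion_atTop (μ := μ) fun _ _ h => ball_subset_ball (x := x₀) h
  rw [hunion, hμ] at h
  rw [← ENNReal.tendsto_ofReal_nhds_top]
  simpa [Function.comp_def, ofReal_measureReal (hfin _)] using h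

section

variable {α E : Type*} [MeasurableSpace α] [NormedAddCommGroup E] {μ : Measure α}

lemma eLpNorm_le_eLpNorm_one_rpow_of_norm_le_one {f : α → E} (hf : ∀ x, ‖f x‖ ≤ 1) {q : ℝ}
    (hq : 1 ≤ q) : eLpNorm f (ENNReal.ofReal q) μ ≤ eLpNorm f 1 μ ^ q⁻¹ := by
  have hq₀ : 0 < q := one_pos.trans_le hq
  rw [eLpNorm_eq_lintegral_rpow_enorm_toReal (by simpa using hq₀) ENNReal.ofReal_ne_top,
    ENNReal.toReal_ofReal hq₀.le, eLpNorm_one_eq_lintegral_enorm, one_div]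
  gcongr with x
  refine ENNReal.rpow_le_self_of_le_one ?_ hq
  rw [← ofReal_norm]
  exact ENNReal.ofReal_le_one.2 (hf x)

lemma eLpNorm_inv_integral_smul_le {f : α → ℝ} (hf₀ : 0 ≤ f) (hf₁ : ∀ x, f x ≤ 1)
    (hfi : Integrable f μ) (hJ : 0 < ∫ x, f x ∂μ) {q : ℝ} (hq : 1 ≤ q) :
    eLpNorm ((∫ x, f x ∂μ)⁻¹ • f) (ENNReal.ofReal q) μ
      ≤ ENNReal.ofReal ((∫ x, f x ∂μ) ^ (q⁻¹ - 1)) := by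
  set J := ∫ x, f x ∂μ
  have hnorm : ∀ x, ‖f x‖ ≤ 1 := fun x => (Real.norm_of_nonneg (hf₀ x)).trans_le (hf₁ x)
  have hL1 : eLpNorm f 1 μ = ENNReal.ofReal J := by
    rw [eLpNorm_one_eq_lintegral_enorm, ofReal_integral_eq_lintegral_ofReal hfi (ae_of_all _ hf₀)]
    exact lintegral_congr fun x => Real.enorm_eq_ofReal (hf₀ x)
  calc eLpNorm (J⁻¹ • f) (ENNReal.ofReal q) μ = ‖J⁻¹‖ₑ * eLpNorm f (ENNReal.ofReal q) μ :=
        eLpNorm_const_smul _ _ _ _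
    _ ≤ ENNReal.ofReal J⁻¹ * ENNReal.ofReal J ^ q⁻¹ := by
        rw [Real.enorm_eq_ofReal (inv_nonneg.2 hJ.le), ← hL1]
        gcongr
        exact eLpNorm_le_eLpNorm_one_rpow_of_norm_le_one hnorm hq
    _ = ENNReal.ofReal (J ^ (q⁻¹ - 1)) := by
        rw [ENNReal.ofReal_rpow_of_nonneg hJ.le (by positivity),
          ← ENNReal.ofReal_mul (by positivity),
          Real.rpow_sub hJ, Real.rpow_one, div_eq_inv_mul]

end

noncomputable def annularBump {X : Type*} [PseudoMetricSpace X] (x₀ : X) (a b : ℝ) (x : X) : ℝ :=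
  max 0 (min (min (dist x x₀ - a) (b - dist x x₀)) 1)

namespace annularBump

section Metric

variable {X : Type*} [PseudoMetricSpace X] {x₀ : X} {a b : ℝ}

lemma nonneg (x : X) : 0 ≤ annularBump x₀ a b x := le_max_left _ _

lemma le_one (x : X) : annularBump x₀ a b x ≤ 1 := max_le zero_le_one (min_le_right _ _)

lemma eq_one {x : X} (ha : a + 1 ≤ dist x x₀) (hb : dist x x₀ ≤ b - 1) :
    annularBump x₀ a b x = 1 := by
  rw [annularBump, min_eq_right (le_min (by linarith) (by linarith)), max_eq_right zero_le_one]

lemma support_subset : Function.support (annularBump x₀ a b) ⊆ ball x₀ b \ ball x₀ a := by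
  intro x hx
  by_contra hx'
  refine hx (max_eq_left ?_)
  rw [Set.mem_sdiff, mem_ball, mem_ball, not_and_or, not_lt, not_not] at hx'
  rcases hx' with h | h
  · exact (min_le_left _ _).trans ((min_le_right _ _).trans (by linarith))
  · exact (min_le_left _ _).trans ((min_le_left _ _).trans (by linarith))

lemma lipschitzWith_one : LipschitzWith 1 (annularBump x₀ a b) := by
  have inner : LipschitzWith 1 fun x => dist x x₀ - a := by
    simpa using (LipschitzWith.dist_left x₀).sub (LipschitzWith.const a)
  have outer : LipschitzWith 1 fun x => b - dist x x₀ := by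
    simpa using (LipschitzWith.const b).sub (LipschitzWith.dist_left x₀)
  have h := ((inner.min outer).min_const 1).const_max 0
  rwa [max_self] at h

end Metric

section Measure

variable {X : Type*} [PseudoMetricSpace X] [MeasurableSpace X] [BorelSpace X] {μ : Measure X}
  {x₀ : X} {a b : ℝ}

lemma integrable (hb : μ (ball x₀ b) ≠ ⊤) : Integrable (annularBump x₀ a b) μ := by
  refine (integrableOn_iff_integrable_of_support_subset
    (support_subset.trans sdiff_subset)).1 ?_
  refine Measure.integrableOn_of_bounded hb lipschitzWith_one.continuous.aestronglyMeasurable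
    (M := 1) (ae_of_all _ fun x => ?_)
  rw [Real.norm_of_nonneg (nonneg x)]
  exact le_one x

lemma measureReal_ball_sub_le_integral (hb : μ (ball x₀ b) ≠ ⊤)
    (ha : μ (closedBall x₀ (a + 1)) ≠ ⊤) :
    μ.real (ball x₀ (b - 1)) - μ.real (closedBall x₀ (a + 1)) ≤ ∫ x, annularBump x₀ a b x ∂μ := by
  set S := ball x₀ (b - 1) \ closedBall x₀ (a + 1)
  have hS : MeasurableSet S := measurableSet_ball.diff measurableSet_closedBall
  calc μ.real (ball x₀ (b - 1)) - μ.real (closedBall x₀ (a + 1)) ≤ μ.real S :=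
        le_measureReal_sdiff ha
    _ = ∫ x in S, annularBump x₀ a b x ∂μ := by
        rw [setIntegral_congr_fun hS fun x hx => eq_one (not_le.1 hx.2).le (mem_ball.1 hx.1).le,
          setIntegral_const, smul_eq_mul, mul_one]
    _ ≤ ∫ x, annularBump x₀ a b x ∂μ := setIntegral_le_integral (integrable hb) (ae_of_all _ nonneg)

lemma tendsto_integral_atTop (hμ : μ univ = ⊤) (hfin : ∀ r, μ (ball x₀ r) ≠ ⊤) :
    Tendsto (fun b => ∫ x, annularBump x₀ a b x ∂μ) atTop atTop := by
  have hclosed : μ (closedBall x₀ (a + 1)) ≠ ⊤ :=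
    measure_ne_top_of_subset (closedBall_subset_ball (lt_add_one _)) (hfin (a + 1 + 1))
  have hlower : Tendsto (fun b => μ.real (ball x₀ (b - 1)) - μ.real (closedBall x₀ (a + 1)))
      atTop atTop :=
    tendsto_atTop_add_const_right _ _ ((tendsto_measureReal_ball_atTop hμ hfin).comp
      (tendsto_atTop_add_const_right _ _ tendsto_id))
  exact tendsto_atTop_mono (fun b => measureReal_ball_sub_le_integral (hfin b) hclosed) hlower

end Measure

end annularBump

theorem rd_space_normalized_bump_general {X : Type*} [MetricSpace X] [MeasurableSpace X]
    [BorelSpace X] (μ : Measure X)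
    (hfin : ∀ (x : X) (r : ℝ), μ (Metric.ball x r) ≠ ⊤)
    (hμ : μ Set.univ = ⊤)
    (q : ℝ) (hq : 1 < q) (x₀ : X) (r₀ : ℝ) (η : ℝ) (hη : 0 < η) :
    ∃ (ε : ℝ) (h : X → ℝ), ε ∈ Set.Ioc (0 : ℝ) 1 ∧
      (∃ K : ℝ, ∀ x y, |h x - h y| ≤ K * dist x y ^ ε) ∧
      Bornology.IsBounded (Function.support h) ∧
      Function.support h ⊆ (Metric.ball x₀ r₀)ᶜ ∧
      (∫ x, h x ∂μ) = 1 ∧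
      eLpNorm h (ENNReal.ofReal q) μ < ENNReal.ofReal η := by
  have hJ := annularBump.tendsto_integral_atTop (a := r₀) hμ (hfin x₀)
  have hdecay : Tendsto (fun J : ℝ => J ^ (q⁻¹ - 1)) atTop (𝓝 0) := by
    simpa using tendsto_rpow_neg_atTop (y := 1 - q⁻¹) (by simp [inv_lt_one_of_one_lt₀ hq])
  obtain ⟨R, hJpos, hsmall⟩ :=
    ((hJ.eventually_gt_atTop 0).and ((hdecay.comp hJ).eventually (gt_mem_nhds hη))).exists
  set f := annularBump x₀ r₀ R
  set J := ∫ x, f x ∂μ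
  have hsupp : Function.support (J⁻¹ • f) ⊆ ball x₀ R \ ball x₀ r₀ :=
    (Function.support_const_smul_subset _ _).trans annularBump.support_subset
  refine ⟨1, J⁻¹ • f, ⟨one_pos, le_rfl⟩, ⟨J⁻¹, fun x y => ?_⟩, isBounded_ball.subset
    (hsupp.trans sdiff_subset), hsupp.trans (sdiff_subset_compl _ _), ?_, ?_⟩
  · have hlip : dist (f x) (f y) ≤ dist x y := by
      simpa using annularBump.lipschitzWith_one.dist_le_mul x y
    rw [Real.rpow_one, Pi.smul_apply, Pi.smul_apply, smul_eq_mul, smul_eq_mul, ← mul_sub, abs_mul,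
      abs_of_pos (inv_pos.2 hJpos), ← Real.dist_eq]
    gcongr
  · simp only [Pi.smul_apply, smul_eq_mul]
    rw [integral_const_mul, inv_mul_cancel₀ hJpos.ne']
  · exact (eLpNorm_inv_integral_smul_le annularBump.nonneg annularBump.le_one
      (annularBump.integrable (hfin x₀ R)) hJpos hq.le).trans_lt
      ((ENNReal.ofReal_lt_ofReal_iff hη).2 hsmall)

/-- Lemma 10.4: in an RD-space with `μ(X) = ∞`, for any ball `B(x₀,r₀)` and any `η > 0`
there is a Hölder function `h` of bounded support with `supp h ⊆ (B(x₀,r₀))ᶜ`,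
`∫ h dμ = 1` and `‖h‖_{L^q(μ)} < η`. -/
theorem rd_space_normalized_bump {X : Type*} [MetricSpace X] [MeasurableSpace X]
    [BorelSpace X] (μ : Measure X) (C κ ν : ℝ) (hC : 1 ≤ C) (hκ : 0 < κ) (hκν : κ ≤ ν)
    (hfin : ∀ (x : X) (r : ℝ), μ (Metric.ball x r) ≠ ⊤)
    (hRD : ∀ (x : X) (r l : ℝ), 0 < r → 1 ≤ l →
      C⁻¹ * l ^ κ * (μ (Metric.ball x r)).toReal ≤ (μ (Metric.ball x (l * r))).toReal ∧
      (μ (Metric.ball x (l * r))).toReal ≤ C * l ^ ν * (μ (Metric.ball x r)).toReal)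
    (hμ : μ Set.univ = ⊤)
    (q : ℝ) (hq : 1 < q) (x₀ : X) (r₀ : ℝ) (hr₀ : 0 < r₀) (η : ℝ) (hη : 0 < η) :
    ∃ (ε : ℝ) (h : X → ℝ), ε ∈ Set.Ioc (0 : ℝ) 1 ∧
      (∃ K : ℝ, ∀ x y, |h x - h y| ≤ K * dist x y ^ ε) ∧
      Bornology.IsBounded (Function.support h) ∧
      Function.support h ⊆ (Metric.ball x₀ r₀)ᶜ ∧
      (∫ x, h x ∂μ) = 1 ∧
      eLpNorm h (ENNReal.ofReal q) μ < ENNReal.ofReal η :=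
  rd_space_normalized_bump_general μ hfin hμ q hq x₀ r₀ η hη
end
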